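/- Let S be a fold string with folding morphism θ_S. Then f(θ_S(abcd)) = 0; consequently the curve of the word θ_S(abcd) (the θ-loop of S) is a closed curve, ending where it starts. -/

import Mathlib

open scoped Classical

/-- Letters of the folding alphabet {D, U}. -/
inductive FoldLetter : Type
  | D : FoldLetter
  | U : FoldLetter
deriving DecidableEq

/-- Words over {D, U}. -/
abbrev FWord := List FoldLetter

/-- The letter morphism μ swapping D and U. -/
def mir : FoldLetter → FoldLetter
  | .D => .U
  | .U => .D

/-- S̄ = μ(τ(S)): reverse the word and swap D and U. -/
def fbar (S : FWord) : FWord := (S.reverse).map mir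

/-- The folding convolution S * T. -/
def conv (S : FWord) : FWord → FWord
  | [] => S
  | b :: T => S ++ b :: conv (fbar S) T

/-- A fold string: a nonempty word over {D,U} starting with D. -/
def IsFoldString (S : FWord) : Prop := S ≠ [] ∧ S.head? = some FoldLetter.D

/-- The alphabet A = {a,b,c,d}, encoded as ZMod 4 (a = 0, b = 1, c = 2, d = 3),
so that σ is addition of 1 and f is k ↦ i^k. -/
abbrev Alpha := ZMod 4

/-- Words over A. -/
abbrev AWord := List Alpha

/-- w(D) = 1, w(U) = -1. -/
def wInt : FoldLetter → ℤ
  | .D => 1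
  | .U => -1

/-- The homomorphism w on words. -/
def wSum (S : FWord) : ℤ := (S.map wInt).sum

/-- θ_S(a) = e₀ e₁ ⋯ e_{m-1} with e₀ = a and e_i = σ^{w(a₁⋯a_i)}(a). -/
def thetaA (S : FWord) : AWord :=
  (List.range (S.length + 1)).map (fun i => ((wSum (S.take i) : ℤ) : Alpha))

/-- The word operation στ (reverse, then cyclically shift each letter). -/
def st (v : AWord) : AWord := v.reverse.map (· + 1)

/-- θ_S on a letter: θ_S(σ^k(a)) = (στ)^k (θ_S(a)). -/
def thetaL (S : FWord) (e : Alpha) : AWord := st^[e.val] (thetaA S)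

/-- The folding morphism θ_S as a monoid endomorphism of A*. -/
def theta (S : FWord) (v : AWord) : AWord := v.flatMap (thetaL S)

/-- f on letters: f(a) = 1, f(b) = i, f(c) = -1, f(d) = -i. -/
noncomputable def fL : Alpha → ℂ := fun e => Complex.I ^ e.val

/-- The homomorphism f : A* → (ℂ, +). -/
noncomputable def fW (v : AWord) : ℂ := (v.map fL).sum

/-- The k-th point z_k of the curve of a word v. -/
noncomputable def pt (v : AWord) (k : ℕ) : ℂ := fW (v.take k)

/-- The curve of v traverses a segment twice. -/
def TraversesTwice (v : AWord) : Prop :=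
  ∃ k l, k < v.length ∧ l < v.length ∧ k ≠ l ∧
    ({pt v k, pt v (k + 1)} : Set ℂ) = ({pt v l, pt v (l + 1)} : Set ℂ)

/-- The fold string S is self-avoiding. -/
def SelfAvoiding (S : FWord) : Prop :=
  ∀ n : ℕ, 1 ≤ n → ¬ TraversesTwice ((theta S)^[n] [0])

/-- z ∈ ℂ is a Gaussian integer. -/
def IsGaussianInt (z : ℂ) : Prop := ∃ p q : ℤ, z = (p : ℂ) + (q : ℂ) * Complex.I

/-- The number of indices k ∈ {0, …, |v|} with z_k = z (occurrences of z among
the points of the curve of v). -/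
noncomputable def countAt (v : AWord) (z : ℂ) : ℕ :=
  ((Finset.range (v.length + 1)).filter (fun k => pt v k = z)).card

/-- The fold string S is planefilling. -/
def Planefilling (S : FWord) : Prop :=
  ∀ R : ℝ, 0 < R → ∃ n : ℕ, 1 ≤ n ∧ ∃ q : ℂ, IsGaussianInt q ∧
    ∀ z : ℂ, IsGaussianInt z → ‖z - q‖ ≤ R →
      2 ≤ countAt ((theta S)^[n] [0]) z

/-- The word θ_S(abcd), whose curve is the θ-loop of S. -/
def loopWord (S : FWord) : AWord := theta S [0, 1, 2, 3]

/-- The rounding of the closed curve of a word v (all of whose steps are unit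
segments and with f(v) = 0), as a subset of ℂ. -/
noncomputable def roundedCurve (v : AWord) : Set ℂ :=
  ⋃ k ∈ Finset.range v.length,
    (segment ℝ (pt v k + (pt v (k + 1) - pt v k) / 4)
        (pt v (k + 1) - (pt v (k + 1) - pt v k) / 4) ∪
      segment ℝ (pt v (k + 1) - (pt v (k + 1) - pt v k) / 4)
        (pt v ((k + 1) % v.length) +
          (pt v ((k + 1) % v.length + 1) - pt v ((k + 1) % v.length)) / 4))

/-- The number of indices k ∈ {0, …, |v| - 1} with z_k = z (occurrences of z among
the vertices of the closed curve of v). -/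
noncomputable def vertexCount (v : AWord) (z : ℂ) : ℕ :=
  ((Finset.range v.length).filter (fun k => pt v k = z)).card

/-- The closed curve of v is maximally simple: it is simple, and every Gaussian
integer lying in a bounded connected component of the complement of its rounding
occurs exactly twice among its vertices. -/
def MaximallySimple (v : AWord) : Prop :=
  ¬ TraversesTwice v ∧
    ∀ z : ℂ, IsGaussianInt z → z ∉ roundedCurve v →
      Bornology.IsBounded (connectedComponentIn (roundedCurve v)ᶜ z) →
      vertexCount v z = 2

/-- A D-word: letters from {a,c} (even) and {b,d} (odd) alternate. -/
def IsDWord (v : AWord) : Prop :=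
  ∀ k (h : k + 1 < v.length),
    (v[k]'(Nat.lt_of_succ_lt h)).val % 2 ≠ (v[k + 1]'h).val % 2

/-- A loop word: a nonempty D-word with f(v) = 0. -/
def IsLoopWord (v : AWord) : Prop := v ≠ [] ∧ IsDWord v ∧ fW v = 0

/-- The eight square words σᵏ(abcd), σᵏ(adcb), k = 0,1,2,3. -/
def squareWords : List AWord :=
  [[0, 1, 2, 3], [1, 2, 3, 0], [2, 3, 0, 1], [3, 0, 1, 2],
   [0, 3, 2, 1], [1, 0, 3, 2], [2, 1, 0, 3], [3, 2, 1, 0]]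

/-- K[v] ⊆ ℂ: the union of the segments of the curve of v. -/
noncomputable def KSet (v : AWord) : Set ℂ :=
  ⋃ k ∈ Finset.range v.length, segment ℝ (pt v k) (pt v (k + 1))

/-- The number of boundary points of S: Gaussian integers visited exactly once
by the curve of θ_S(a). -/
noncomputable def rCount (S : FWord) : ℕ :=
  ((Finset.range ((thetaA S).length + 1)).filter
    (fun k => countAt (thetaA S) (pt (thetaA S) k) = 1)).card

/-- The k-th point Z_k of the infinite curve of S. -/
noncomputable def Zpt (S : FWord) (k : ℕ) : ℂ := pt ((theta S)^[k] [0]) k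

/-- The fold string S is perfect. -/
def IsPerfectFold (S : FWord) : Prop :=
  SelfAvoiding S ∧
    ∀ p q : ℂ, IsGaussianInt p → IsGaussianInt q → ‖p - q‖ = 1 →
      ∃! jk : Fin 4 × ℕ,
        ({Complex.I ^ (jk.1 : ℕ) * Zpt S jk.2,
          Complex.I ^ (jk.1 : ℕ) * Zpt S (jk.2 + 1)} : Set ℂ) = ({p, q} : Set ℂ)

/-!
Reversal does not change `f` and `σ` multiplies it by `i`, so `f(θ_S(σᵏ a)) = iᵏ f(θ_S(a))` and
`f ∘ θ_S = f(θ_S(a)) · f`. Hence `f(θ_S(abcd)) = (1 + i - 1 - i) f(θ_S(a)) = 0`.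
-/

lemma fW_nil : fW [] = 0 := rfl

lemma fW_cons (e : Alpha) (v : AWord) : fW (e :: v) = fL e + fW v := List.sum_cons

lemma fW_append (u v : AWord) : fW (u ++ v) = fW u + fW v := by
  simp only [fW, List.map_append, List.sum_append]

lemma fL_add_one (e : Alpha) : fL (e + 1) = Complex.I * fL e := by
  have : Fact (1 < 4) := ⟨by norm_num⟩
  rw [fL, fL, ZMod.val_add, ZMod.val_one, ← pow_eq_pow_mod _ Complex.I_pow_four, pow_succ,
    mul_comm]

lemma fW_st (v : AWord) : fW (st v) = Complex.I * fW v := by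
  simp only [fW, st, List.map_map, List.map_reverse, List.sum_reverse, Function.comp_def,
    fL_add_one, List.sum_map_mul_left]

lemma fW_thetaL (S : FWord) (e : Alpha) : fW (thetaL S e) = fL e * fW (thetaA S) := by
  rw [thetaL, fL]
  induction e.val with
  | zero => simp
  | succ n ih => rw [Function.iterate_succ_apply', fW_st, ih, pow_succ']; ring

theorem fW_theta (S : FWord) (v : AWord) : fW (theta S v) = fW (thetaA S) * fW v := by
  induction v with
  | nil => simp [theta, fW_nil]
  | cons e v ih =>
    rw [theta, List.flatMap_cons, fW_append, fW_thetaL, ← theta, ih, fW_cons]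
    ring

lemma fW_abcd : fW [0, 1, 2, 3] = 0 := by
  have hval : ((0 : Alpha)).val = 0 ∧ ((1 : Alpha)).val = 1 ∧ ((2 : Alpha)).val = 2 ∧
      ((3 : Alpha)).val = 3 := by decide
  simp only [fW, fL, List.map_cons, List.map_nil, List.sum_cons, List.sum_nil, hval.1, hval.2.1,
    hval.2.2.1, hval.2.2.2]
  linear_combination (1 + Complex.I) * Complex.I_sq

lemma pt_length (v : AWord) : pt v v.length = fW v := by
  rw [pt, List.take_length]

lemma pt_zero (v : AWord) : pt v 0 = 0 := by
  rw [pt, List.take_zero, fW_nil]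

theorem thetaLoop_closed_general (S : FWord) :
    fW (loopWord S) = 0 ∧ pt (loopWord S) (loopWord S).length = pt (loopWord S) 0 := by
  have hclosed : fW (loopWord S) = 0 := by rw [loopWord, fW_theta, fW_abcd, mul_zero]
  exact ⟨hclosed, by rw [pt_length, pt_zero, hclosed]⟩

/-- f(θ_S(abcd)) = 0, so the θ-loop is a closed curve,
ending where it starts. -/
theorem thetaLoop_closed (S : FWord) (hS : IsFoldString S) :
    fW (loopWord S) = 0 ∧ pt (loopWord S) (loopWord S).length = pt (loopWord S) 0 :=
  thetaLoop_closed_general S
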